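/- Let C be a coalgebra over a field k with an exhaustive coalgebra filtration {F_n}_{n≥0} (so Δ(F_n) ⊆ Σ_{i=0}^{n} F_i ⊗ F_{n−i}) such that F_0 = C_0, the coradical of C. If the associated graded coalgebra gr_F C = ⊕_{n≥0} F_n/F_{n−1} is coradically graded, then F_n = C_n for all n, i.e. {F_n} is the coradical filtration of C. -/

import Mathlib

open scoped TensorProduct ENNReal

/-- Gelfand–Kirillov dimension of a `k`-algebra `A`. -/
noncomputable def gkDim (k A : Type*) [Field k] [Ring A] [Algebra k A] : ℝ≥0∞ :=
  ⨆ (V : Submodule k A) (_ : (1 : A) ∈ V) (_ : FiniteDimensional k V),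
    Filter.limsup
      (fun n : ℕ => ENNReal.ofReal
        (Real.log (Module.finrank k ↥(V ^ n)) / Real.log n)) Filter.atTop

/-- A submodule is a subcoalgebra if comultiplication maps it into its (image) tensor square. -/
def IsSubcoalgebra (k : Type*) {A : Type*} [CommSemiring k] [AddCommMonoid A] [Module k A]
    [Coalgebra k A] (C : Submodule k A) : Prop :=
  ∀ x ∈ C, Coalgebra.comul (R := k) x ∈
    LinearMap.range (TensorProduct.map C.subtype C.subtype)

/-- The coradical: the sum of all simple subcoalgebras. -/
noncomputable def coradical (k A : Type*) [CommSemiring k] [AddCommMonoid A] [Module k A]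
    [Coalgebra k A] : Submodule k A :=
  sSup {S | IsSubcoalgebra k S ∧ S ≠ ⊥ ∧
    ∀ T ≤ S, IsSubcoalgebra k T → T = ⊥ ∨ T = S}

/-- The image of `C ⊗ D` inside `A ⊗ A`. -/
noncomputable def tensorSubmodule (k : Type*) {A : Type*} [CommSemiring k] [AddCommMonoid A]
    [Module k A] (C D : Submodule k A) : Submodule k (A ⊗[k] A) :=
  LinearMap.range (TensorProduct.map C.subtype D.subtype)

/-- The coradical filtration `C_n = Δ⁻¹(A ⊗ C_{n-1} + C_0 ⊗ A)`. -/
noncomputable def coradFilt (k : Type*) (A : Type*) [CommSemiring k] [AddCommMonoid A]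
    [Module k A] [Coalgebra k A] : ℕ → Submodule k A
  | 0 => coradical k A
  | (n + 1) => Submodule.comap (Coalgebra.comul : A →ₗ[k] A ⊗[k] A)
      (tensorSubmodule k ⊤ (coradFilt k A n) ⊔ tensorSubmodule k (coradical k A) ⊤)

/-- Group-like elements. -/
def IsGrpLike (k : Type*) {A : Type*} [CommSemiring k] [AddCommMonoid A] [Module k A]
    [Coalgebra k A] (g : A) : Prop :=
  Coalgebra.counit (R := k) g = 1 ∧ Coalgebra.comul (R := k) g = g ⊗ₜ[k] g

/-- A coalgebra is pointed if its coradical is spanned by the group-like elements. -/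
def IsPointedCoalg (k A : Type*) [CommSemiring k] [AddCommMonoid A] [Module k A]
    [Coalgebra k A] : Prop :=
  coradical k A = Submodule.span k {g : A | IsGrpLike k g}

/-- A Hopf algebra is connected if its coradical is `k·1`. -/
def IsConnectedHopf (k A : Type*) [CommSemiring k] [Semiring A] [Module k A] [Algebra k A]
    [Coalgebra k A] : Prop :=
  coradical k A = Submodule.span k {(1 : A)}

/-- The space of primitive elements of a bialgebra. -/
noncomputable def primitives (k A : Type*) [CommRing k] [Ring A] [Module k A]
    [Coalgebra k A] : Submodule k A :=
  LinearMap.ker ((Coalgebra.comul : A →ₗ[k] A ⊗[k] A) -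
    ((TensorProduct.mk k A A).flip 1 + TensorProduct.mk k A A 1))

/-- The span of products of at most `n` (and at least one) elements of `W`. -/
noncomputable def subPow (k : Type*) {A : Type*} [CommSemiring k] [Semiring A] [Algebra k A]
    (W : Submodule k A) (n : ℕ) : Submodule k A :=
  ⨆ i ∈ Finset.Icc 1 n, W ^ i

/-- A Hopf subalgebra: a subalgebra which is also a subcoalgebra and is stable under
the antipode. -/
def IsHopfSubalgebra (k : Type*) {H : Type*} [CommSemiring k] [Semiring H] [HopfAlgebra k H]
    (B : Subalgebra k H) : Prop :=
  (∀ x ∈ B, Coalgebra.comul (R := k) x ∈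
      LinearMap.range (TensorProduct.map B.toSubmodule.subtype B.toSubmodule.subtype)) ∧
  (∀ x ∈ B, HopfAlgebra.antipode (R := k) x ∈ B)

/-- `F (n-1)` with the convention `F (-1) = ⊥`. -/
def filtPred {k A : Type*} [CommSemiring k] [AddCommMonoid A] [Module k A]
    (F : ℕ → Submodule k A) : ℕ → Submodule k A
  | 0 => ⊥
  | (n + 1) => F n

/-- The `n`-th graded piece `F n / F (n-1)` of a filtration. -/
abbrev filtPiece {k A : Type*} [Field k] [AddCommGroup A] [Module k A]
    (F : ℕ → Submodule k A) (n : ℕ) :=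
  ↥(F n) ⧸ Submodule.comap (F n).subtype (filtPred F n)

/-!
Over a field the wedge `X ∧ Y = Δ⁻¹(X ⊗ C + C ⊗ Y)` is associative (coassociativity and
exactness of `⊗`), so `C_{a+b+1} = C_a ∧ C_b` for the coradical filtration. For the coradically
graded `D` this forces `D_n = ⊕_{i ≤ n} D(i)`: the degree-`j` part of an element of `D_{N+1}`,
`j > N + 1`, lies in `D_0 ∧ D_0 = D_1`, hence vanishes.

Any coalgebra filtration with `F_0 = C_0` satisfies `F_n ⊆ C_n`. Conversely, if
`y ∈ C_{n+1} = F_0 ∧ F_n` lies in `F_{m+1}` with `m > n`, then the symbol of `y` in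
`F_{m+1} / F_m ≃ D(m+1)` lies in `D_0 ∧ D_n = D_{n+1}`, so it is zero and `y ∈ F_m`. Since the
filtration is exhaustive, descending this way gives `y ∈ F_{n+1}`.
-/

open TensorProduct LinearMap

section TensorSubmodule

variable {k : Type*} [CommSemiring k] {A B : Type*} [AddCommMonoid A] [Module k A]
  [AddCommMonoid B] [Module k B]

theorem tensorSubmodule_mono {U U' V V' : Submodule k A} (hU : U ≤ U') (hV : V ≤ V') :
    tensorSubmodule k U V ≤ tensorSubmodule k U' V' := by
  rintro _ ⟨t, rfl⟩
  refine ⟨TensorProduct.map (Submodule.inclusion hU) (Submodule.inclusion hV) t, ?_⟩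
  rw [← LinearMap.comp_apply, ← TensorProduct.map_comp]
  rfl

theorem tmul_mem_tensorSubmodule {U V : Submodule k A} {a b : A} (ha : a ∈ U) (hb : b ∈ V) :
    a ⊗ₜ[k] b ∈ tensorSubmodule k U V :=
  ⟨⟨a, ha⟩ ⊗ₜ ⟨b, hb⟩, rfl⟩

theorem map_tensorSubmodule_le (f g : A →ₗ[k] B) (U V : Submodule k A) :
    (tensorSubmodule k U V).map (TensorProduct.map f g) ≤
      tensorSubmodule k (U.map f) (V.map g) := by
  rintro _ ⟨_, ⟨t, rfl⟩, rfl⟩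
  induction t with
  | zero => simp
  | tmul a b => exact tmul_mem_tensorSubmodule ⟨a, a.2, rfl⟩ ⟨b, b.2, rfl⟩
  | add s t hs ht => simpa only [map_add] using add_mem hs ht

theorem map_sup_tensorSubmodule_le {f g : A →ₗ[k] B} {X Y : Submodule k A}
    {X' Y' : Submodule k B} (hX : X.map f ≤ X') (hY : Y.map g ≤ Y') :
    (tensorSubmodule k X ⊤ ⊔ tensorSubmodule k ⊤ Y).map (TensorProduct.map f g) ≤
      tensorSubmodule k X' ⊤ ⊔ tensorSubmodule k ⊤ Y' := by
  rw [Submodule.map_sup]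
  exact sup_le_sup ((map_tensorSubmodule_le f g _ _).trans (tensorSubmodule_mono hX le_top))
    ((map_tensorSubmodule_le f g _ _).trans (tensorSubmodule_mono le_top hY))

theorem tensorSubmodule_top_left (V : Submodule k A) :
    tensorSubmodule k ⊤ V = range (lTensor A V.subtype) := by
  rw [tensorSubmodule, ← lTensor_comp_rTensor, range_comp_of_range_eq_top]
  exact range_eq_top.2 (rTensor_surjective _ fun a => ⟨⟨a, trivial⟩, rfl⟩)

theorem tensorSubmodule_top_right (U : Submodule k A) :
    tensorSubmodule k U ⊤ = range (rTensor A U.subtype) := by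
  rw [tensorSubmodule, ← rTensor_comp_lTensor, range_comp_of_range_eq_top]
  exact range_eq_top.2 (lTensor_surjective _ fun a => ⟨⟨a, trivial⟩, rfl⟩)

end TensorSubmodule

theorem ker_map_eq_tensorSubmodule_sup {k A P Q : Type*} [Field k] [AddCommGroup A] [Module k A]
    [AddCommGroup P] [Module k P] [AddCommGroup Q] [Module k Q]
    (f : A →ₗ[k] P) (g : A →ₗ[k] Q) :
    ker (TensorProduct.map f g) =
      tensorSubmodule k (ker f) ⊤ ⊔ tensorSubmodule k ⊤ (ker g) := by
  have hinj : ker (TensorProduct.map ((ker f).liftQ f le_rfl) ((ker g).liftQ g le_rfl)) = ⊥ :=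
    ker_eq_bot.2 <| TensorProduct.map_injective_of_flat_flat _ _
      (ker_eq_bot.1 <| (ker f).ker_liftQ_eq_bot _ _ le_rfl)
      (ker_eq_bot.1 <| (ker g).ker_liftQ_eq_bot _ _ le_rfl)
  have hfac : TensorProduct.map f g = TensorProduct.map ((ker f).liftQ f le_rfl)
      ((ker g).liftQ g le_rfl) ∘ₗ TensorProduct.map (ker f).mkQ (ker g).mkQ := by
    rw [← TensorProduct.map_comp, Submodule.liftQ_mkQ, Submodule.liftQ_mkQ]
  rw [hfac, ker_comp_of_ker_eq_bot _ hinj,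
    TensorProduct.map_ker (LinearMap.exact_subtype_mkQ _) (Submodule.mkQ_surjective _)
      (LinearMap.exact_subtype_mkQ _) (Submodule.mkQ_surjective _),
    tensorSubmodule_top_left, tensorSubmodule_top_right, sup_comm]

section Wedge

variable {k : Type*} [CommSemiring k] {A : Type*} [AddCommMonoid A] [Module k A] [Coalgebra k A]

local notation "Δ" => (Coalgebra.comul : A →ₗ[k] A ⊗[k] A)

noncomputable def wedge (X Y : Submodule k A) : Submodule k A :=
  (tensorSubmodule k X ⊤ ⊔ tensorSubmodule k ⊤ Y).comap Δ

theorem coradFilt_succ (n : ℕ) :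
    coradFilt k A (n + 1) = wedge (coradFilt k A 0) (coradFilt k A n) := by
  rw [wedge, sup_comm]
  rfl

def IsCoalgebraFiltration (F : ℕ → Submodule k A) : Prop :=
  ∀ n, ∀ x ∈ F n, Δ x ∈ ⨆ i ∈ Finset.range (n + 1), tensorSubmodule k (F i) (F (n - i))

theorem IsCoalgebraFiltration.le_coradFilt {F : ℕ → Submodule k A}
    (hF : IsCoalgebraFiltration F) (hmono : Monotone F) (h0 : F 0 ≤ coradFilt k A 0) :
    ∀ n, F n ≤ coradFilt k A n
  | 0 => h0
  | n + 1 => fun x hx => by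
    rw [coradFilt_succ, wedge, Submodule.mem_comap]
    refine SetLike.le_def.1 (iSup₂_le fun i hi => ?_) (hF (n + 1) x hx)
    rcases Nat.eq_zero_or_pos i with rfl | hi0
    · exact le_sup_of_le_left (tensorSubmodule_mono h0 le_top)
    · have hi := Finset.mem_range.1 hi
      exact le_sup_of_le_right (tensorSubmodule_mono le_top
        ((hmono (by omega)).trans (hF.le_coradFilt hmono h0 n)))

end Wedge

section WedgeAssoc

variable {k : Type*} [Field k] {A : Type*} [AddCommGroup A] [Module k A] [Coalgebra k A]

local notation "Δ" => (Coalgebra.comul : A →ₗ[k] A ⊗[k] A)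

theorem wedge_eq_ker (X Y : Submodule k A) :
    wedge X Y = ker (TensorProduct.map X.mkQ Y.mkQ ∘ₗ Δ) := by
  rw [ker_comp, ker_map_eq_tensorSubmodule_sup, Submodule.ker_mkQ, Submodule.ker_mkQ, wedge]

theorem wedge_assoc (X Y Z : Submodule k A) :
    wedge X (wedge Y Z) = wedge (wedge X Y) Z := by
  have hL : wedge X (wedge Y Z) =
      ker (TensorProduct.map X.mkQ (TensorProduct.map Y.mkQ Z.mkQ ∘ₗ Δ) ∘ₗ Δ) := by
    rw [ker_comp, ker_map_eq_tensorSubmodule_sup, wedge_eq_ker Y Z, Submodule.ker_mkQ, wedge]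
  have hR : wedge (wedge X Y) Z =
      ker (TensorProduct.map (TensorProduct.map X.mkQ Y.mkQ ∘ₗ Δ) Z.mkQ ∘ₗ Δ) := by
    rw [ker_comp, ker_map_eq_tensorSubmodule_sup, wedge_eq_ker X Y, Submodule.ker_mkQ, wedge]
  have hcoassoc : TensorProduct.map X.mkQ (TensorProduct.map Y.mkQ Z.mkQ ∘ₗ Δ) ∘ₗ Δ =
      (TensorProduct.assoc k _ _ _).toLinearMap ∘ₗ
        TensorProduct.map (TensorProduct.map X.mkQ Y.mkQ ∘ₗ Δ) Z.mkQ ∘ₗ Δ := by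
    calc TensorProduct.map X.mkQ (TensorProduct.map Y.mkQ Z.mkQ ∘ₗ Δ) ∘ₗ Δ
        = TensorProduct.map X.mkQ (TensorProduct.map Y.mkQ Z.mkQ) ∘ₗ lTensor A Δ ∘ₗ Δ := by
          rw [← comp_assoc, map_comp_lTensor]
      _ = TensorProduct.map X.mkQ (TensorProduct.map Y.mkQ Z.mkQ) ∘ₗ
            (TensorProduct.assoc k A A A).toLinearMap ∘ₗ rTensor A Δ ∘ₗ Δ := by
          rw [← Coalgebra.coassoc]
      _ = (TensorProduct.assoc k _ _ _).toLinearMap ∘ₗ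
            TensorProduct.map (TensorProduct.map X.mkQ Y.mkQ ∘ₗ Δ) Z.mkQ ∘ₗ Δ := by
          rw [← comp_assoc, TensorProduct.map_map_comp_assoc_eq, comp_assoc, ← comp_assoc Δ,
            map_comp_rTensor]
  rw [hL, hR, hcoassoc, ker_comp_of_ker_eq_bot _ (LinearEquiv.ker _)]

theorem coradFilt_add_add_one (a b : ℕ) :
    coradFilt k A (a + b + 1) = wedge (coradFilt k A a) (coradFilt k A b) := by
  induction a with
  | zero => rw [zero_add, coradFilt_succ]
  | succ a ih =>
    rw [show a + 1 + b + 1 = (a + b + 1) + 1 by omega, coradFilt_succ, ih, wedge_assoc,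
      ← coradFilt_succ]

end WedgeAssoc

section Graded

variable {k : Type*} [CommSemiring k] {D : Type*} [AddCommMonoid D] [Module k D]

noncomputable def gradedProj {ι : Type*} [DecidableEq ι] (𝒟 : ι → Submodule k D)
    [DirectSum.Decomposition 𝒟] (i : ι) : D →ₗ[k] D :=
  (𝒟 i).subtype ∘ₗ DirectSum.component k ι (fun j => 𝒟 j) i ∘ₗ
    (DirectSum.decomposeLinearEquiv 𝒟).toLinearMap

section Proj

variable {ι : Type*} [DecidableEq ι] (𝒟 : ι → Submodule k D) [DirectSum.Decomposition 𝒟]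

theorem gradedProj_apply (i : ι) (x : D) :
    gradedProj 𝒟 i x = DirectSum.decompose 𝒟 x i := rfl

theorem gradedProj_mem (i : ι) (x : D) : gradedProj 𝒟 i x ∈ 𝒟 i :=
  (DirectSum.decompose 𝒟 x i).2

theorem gradedProj_of_mem {i : ι} {x : D} (hx : x ∈ 𝒟 i) : gradedProj 𝒟 i x = x :=
  DirectSum.decompose_of_mem_same 𝒟 hx

theorem gradedProj_of_mem_ne {i j : ι} {x : D} (hx : x ∈ 𝒟 i) (hij : i ≠ j) :
    gradedProj 𝒟 j x = 0 :=
  DirectSum.decompose_of_mem_ne 𝒟 hx hij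

theorem gradedProj_comp_subtype (i j : ι) :
    gradedProj 𝒟 j ∘ₗ (𝒟 i).subtype = if i = j then (𝒟 i).subtype else 0 := by
  ext ⟨x, hx⟩
  split_ifs with h
  · subst h; exact gradedProj_of_mem 𝒟 hx
  · exact gradedProj_of_mem_ne 𝒟 hx h

end Proj

def gradedUpTo (𝒟 : ℕ → Submodule k D) (n : ℕ) : Submodule k D := ⨆ i ≤ n, 𝒟 i

variable (𝒟 : ℕ → Submodule k D)

theorem le_gradedUpTo {i n : ℕ} (h : i ≤ n) : 𝒟 i ≤ gradedUpTo 𝒟 n :=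
  le_iSup₂_of_le i h le_rfl

theorem gradedUpTo_mono : Monotone (gradedUpTo 𝒟) :=
  fun _ _ h => iSup₂_le fun _ hi => le_gradedUpTo 𝒟 (hi.trans h)

theorem gradedUpTo_zero : gradedUpTo 𝒟 0 = 𝒟 0 := by
  simp [gradedUpTo]

theorem gradedUpTo_one : gradedUpTo 𝒟 1 = 𝒟 0 ⊔ 𝒟 1 := by
  rw [gradedUpTo, Nat.iSup_le_succ, ← gradedUpTo, gradedUpTo_zero]

variable [DirectSum.Decomposition 𝒟]

theorem mem_gradedUpTo_iff {n : ℕ} {x : D} :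
    x ∈ gradedUpTo 𝒟 n ↔ ∀ j, n < j → gradedProj 𝒟 j x = 0 := by
  classical
  constructor
  · intro hx j hj
    have hle : gradedUpTo 𝒟 n ≤ ker (gradedProj 𝒟 j) :=
      iSup₂_le fun _ hi y hy => gradedProj_of_mem_ne 𝒟 hy (by omega)
    exact hle hx
  · intro hx
    rw [← DirectSum.sum_support_decompose 𝒟 x]
    refine sum_mem fun i _ => ?_
    by_cases hi : i ≤ n
    · exact le_gradedUpTo 𝒟 hi (DirectSum.decompose 𝒟 x i).2
    · rw [← gradedProj_apply, hx i (by omega)]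
      exact zero_mem _

theorem eq_zero_of_mem_gradedUpTo {j n : ℕ} {x : D} (hx : x ∈ 𝒟 j)
    (hx' : x ∈ gradedUpTo 𝒟 n) (h : n < j) : x = 0 := by
  rw [← gradedProj_of_mem 𝒟 hx]
  exact (mem_gradedUpTo_iff 𝒟).1 hx' j h

theorem map_gradedProj_gradedUpTo_le {a b c : ℕ} (h : c ≤ b ∨ a < c) :
    (gradedUpTo 𝒟 a).map (gradedProj 𝒟 c) ≤ gradedUpTo 𝒟 b := by
  rintro _ ⟨x, hx, rfl⟩
  rcases h with h | h
  · exact le_gradedUpTo 𝒟 h (gradedProj_mem 𝒟 c x)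
  · rw [(mem_gradedUpTo_iff 𝒟).1 hx c h]
    exact zero_mem _

theorem sum_map_gradedProj_of_mem_tensorSubmodule {a b : ℕ} {t : D ⊗[k] D}
    (ht : t ∈ tensorSubmodule k (𝒟 a) (𝒟 b)) (j : ℕ) :
    ∑ c ∈ Finset.range (j + 1), TensorProduct.map (gradedProj 𝒟 c) (gradedProj 𝒟 (j - c)) t =
      if a + b = j then t else 0 := by
  obtain ⟨s, rfl⟩ := ht
  simp_rw [← LinearMap.comp_apply, ← TensorProduct.map_comp, gradedProj_comp_subtype]
  split_ifs with hab
  · rw [Finset.sum_eq_single a]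
    · simp [show j - a = b by omega]
    · intro c _ hca
      simp [Ne.symm hca]
    · intro ha
      exact absurd (Finset.mem_range.2 (by omega)) ha
  · refine Finset.sum_eq_zero fun c hc => ?_
    have hc := Finset.mem_range.1 hc
    by_cases hca : a = c
    · simp [hca, show b ≠ j - c by omega]
    · simp [hca]

end Graded

section GradedCoalgebra

variable {k : Type*} [CommSemiring k] {D : Type*} [AddCommMonoid D] [Module k D] [Coalgebra k D]
variable (𝒟 : ℕ → Submodule k D)

local notation "Δ" => (Coalgebra.comul : D →ₗ[k] D ⊗[k] D)

def IsGradedComul : Prop :=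
  ∀ i, ∀ x ∈ 𝒟 i, Δ x ∈ ⨆ c ∈ Finset.range (i + 1), tensorSubmodule k (𝒟 c) (𝒟 (i - c))

theorem IsGradedComul.isCoalgebraFiltration_gradedUpTo {𝒟 : ℕ → Submodule k D}
    (h : IsGradedComul 𝒟) : IsCoalgebraFiltration (gradedUpTo 𝒟) := by
  intro n
  suffices hle : gradedUpTo 𝒟 n ≤ (⨆ i ∈ Finset.range (n + 1),
      tensorSubmodule k (gradedUpTo 𝒟 i) (gradedUpTo 𝒟 (n - i))).comap Δ from fun x hx => hle hx
  refine iSup₂_le fun i hi x hx =>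
    Submodule.mem_comap.2 <| SetLike.le_def.1 (iSup₂_le fun c hc => ?_) (h i x hx)
  have hc := Finset.mem_range.1 hc
  exact le_iSup₂_of_le c (Finset.mem_range.2 (by omega))
    (tensorSubmodule_mono (le_gradedUpTo 𝒟 le_rfl) (le_gradedUpTo 𝒟 (by omega)))

variable [DirectSum.Decomposition 𝒟]

theorem comul_gradedProj (h : IsGradedComul 𝒟) (j : ℕ) (x : D) :
    Δ (gradedProj 𝒟 j x) = ∑ c ∈ Finset.range (j + 1),
      TensorProduct.map (gradedProj 𝒟 c) (gradedProj 𝒟 (j - c)) (Δ x) := by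
  set L := ∑ c ∈ Finset.range (j + 1), TensorProduct.map (gradedProj 𝒟 c) (gradedProj 𝒟 (j - c))
  suffices hL : Δ ∘ₗ gradedProj 𝒟 j = L ∘ₗ Δ by
    simpa [L] using LinearMap.congr_fun hL x
  refine DirectSum.decompose_lhom_ext 𝒟 fun i => LinearMap.ext fun ⟨x, hx⟩ => ?_
  have hdeg : (⨆ c ∈ Finset.range (i + 1), tensorSubmodule k (𝒟 c) (𝒟 (i - c))) ≤
      L.eqLocus (if i = j then LinearMap.id else 0) := iSup₂_le fun c hc t ht => by
    have hc := Finset.mem_range.1 hc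
    rw [mem_eqLocus, LinearMap.sum_apply,
      sum_map_gradedProj_of_mem_tensorSubmodule 𝒟 ht, show c + (i - c) = i by omega]
    split_ifs <;> simp
  have hx' := mem_eqLocus.1 (hdeg (h i x hx))
  simp only [comp_apply, Submodule.subtype_apply, hx']
  split_ifs with hij
  · rw [gradedProj_of_mem 𝒟 (hij ▸ hx), id_apply]
  · rw [gradedProj_of_mem_ne 𝒟 hx hij, map_zero, LinearMap.zero_apply]

theorem gradedProj_mem_wedge (h : IsGradedComul 𝒟) {N j : ℕ} (hj : N + 1 < j) {x : D}
    (hx : ∀ a ≤ N, x ∈ wedge (gradedUpTo 𝒟 a) (gradedUpTo 𝒟 (N - a))) :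
    gradedProj 𝒟 j x ∈ wedge (gradedUpTo 𝒟 0) (gradedUpTo 𝒟 0) := by
  rw [wedge, Submodule.mem_comap, comul_gradedProj 𝒟 h]
  refine sum_mem fun c hc => ?_
  have hc := Finset.mem_range.1 hc
  -- cutting at `a = min (c - 1) N`, both projections of the `(c, j - c)` component vanish
  -- outside degree `0`
  exact map_sup_tensorSubmodule_le (map_gradedProj_gradedUpTo_le 𝒟 (by omega))
    (map_gradedProj_gradedUpTo_le 𝒟 (by omega))
    (Submodule.mem_map_of_mem (hx (min (c - 1) N) (min_le_right _ _)))

end GradedCoalgebra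

theorem coradFilt_eq_gradedUpTo {k D : Type*} [Field k] [AddCommGroup D] [Module k D]
    [Coalgebra k D] {𝒟 : ℕ → Submodule k D} [DirectSum.Decomposition 𝒟] (h : IsGradedComul 𝒟)
    (h0 : coradFilt k D 0 = 𝒟 0) (h1 : coradFilt k D 1 = 𝒟 0 ⊔ 𝒟 1) (n : ℕ) :
    coradFilt k D n = gradedUpTo 𝒟 n := by
  rw [← gradedUpTo_zero 𝒟] at h0
  rw [← gradedUpTo_one 𝒟] at h1
  induction n using Nat.strong_induction_on with
  | _ n ih =>
  rcases n with _ | N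
  · exact h0
  refine le_antisymm (fun x hx => (mem_gradedUpTo_iff 𝒟).2 fun j hj => ?_)
    (h.isCoalgebraFiltration_gradedUpTo.le_coradFilt (gradedUpTo_mono 𝒟) h0.ge _)
  have hwedge : ∀ a ≤ N, x ∈ wedge (gradedUpTo 𝒟 a) (gradedUpTo 𝒟 (N - a)) := fun a ha => by
    rwa [← ih a (by omega), ← ih (N - a) (by omega), ← coradFilt_add_add_one,
      show a + (N - a) + 1 = N + 1 by omega]
  have hx1 := gradedProj_mem_wedge 𝒟 h hj hwedge
  rw [← h0, ← coradFilt_succ, h1] at hx1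
  exact eq_zero_of_mem_gradedUpTo 𝒟 (gradedProj_mem 𝒟 j x) hx1 (by omega)

section Symbol

variable {k : Type*} [Field k] {C D : Type*} [AddCommGroup C] [Module k C]
  [AddCommGroup D] [Module k D] {F : ℕ → Submodule k C} {𝒟 : ℕ → Submodule k D}
  (e : ∀ n, filtPiece F n ≃ₗ[k] 𝒟 n)

/-- Extended from `F c` to `C` by an arbitrary retraction `C → F c`; only its values on `F c`
matter. -/
noncomputable def symbol (c : ℕ) : C →ₗ[k] D :=
  (𝒟 c).subtype ∘ₗ (e c).toLinearMap ∘ₗ (Submodule.comap (F c).subtype (filtPred F c)).mkQ ∘ₗ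
    ((F c).subtype.exists_leftInverse_of_injective (F c).ker_subtype).choose

theorem symbol_apply {c : ℕ} {z : C} (hz : z ∈ F c) :
    symbol e c z = e c (Submodule.Quotient.mk ⟨z, hz⟩) := by
  have hretr := LinearMap.congr_fun
    ((F c).subtype.exists_leftInverse_of_injective (F c).ker_subtype).choose_spec ⟨z, hz⟩
  simp only [comp_apply, Submodule.subtype_apply, id_apply] at hretr
  simp only [symbol, comp_apply, hretr]
  rfl

theorem symbol_mem (c : ℕ) (z : C) : symbol e c z ∈ 𝒟 c :=
  Submodule.coe_mem _

theorem symbol_eq_zero_iff {m : ℕ} {z : C} (hz : z ∈ F (m + 1)) :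
    symbol e (m + 1) z = 0 ↔ z ∈ F m := by
  rw [symbol_apply e hz, Submodule.coe_eq_zero, LinearEquiv.map_eq_zero_iff,
    Submodule.Quotient.mk_eq_zero]
  rfl

variable {e}

theorem symbol_eq_zero (hmono : Monotone F) {b c : ℕ} {z : C} (hz : z ∈ F b) (hbc : b < c) :
    symbol e c z = 0 := by
  obtain ⟨m, rfl⟩ : ∃ m, c = m + 1 := ⟨c - 1, by omega⟩
  exact (symbol_eq_zero_iff e (hmono (by omega) hz)).2 (hmono (by omega) hz)

theorem map_symbol_le (hmono : Monotone F) (c n : ℕ) :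
    (F n).map (symbol e c) ≤ gradedUpTo 𝒟 n := by
  rintro _ ⟨z, hz, rfl⟩
  rcases le_or_gt c n with h | h
  · exact le_gradedUpTo 𝒟 h (symbol_mem e c z)
  · rw [symbol_eq_zero hmono hz h]
    exact zero_mem _

end Symbol

section InducedComul

variable {k : Type*} [Field k] {C D : Type*} [AddCommGroup C] [Module k C] [Coalgebra k C]
  [AddCommGroup D] [Module k D] [Coalgebra k D] {F : ℕ → Submodule k C}
  {𝒟 : ℕ → Submodule k D}

/-- Through `e`, the comultiplication of `D` is the one that `Δ_C` induces on `gr_F C`. -/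
def IsInducedComul (e : ∀ n, filtPiece F n ≃ₗ[k] 𝒟 n) : Prop :=
  ∀ (n : ℕ) (x : C) (hx : x ∈ F n),
    ∃ (s : Finset ℕ) (d : ℕ → ℕ) (a b : ℕ → C)
      (ha : ∀ j : ℕ, a j ∈ F (d j)) (hb : ∀ j : ℕ, b j ∈ F (n - d j)),
      (∀ j ∈ s, d j ≤ n) ∧
      Coalgebra.comul (R := k) x = ∑ j ∈ s, a j ⊗ₜ[k] b j ∧
      Coalgebra.comul (R := k) ((e n (Submodule.Quotient.mk ⟨x, hx⟩) : ↥(𝒟 n)) : D) =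
        ∑ j ∈ s, ((e (d j) (Submodule.Quotient.mk ⟨a j, ha j⟩) : ↥(𝒟 (d j))) : D) ⊗ₜ[k]
          ((e (n - d j) (Submodule.Quotient.mk ⟨b j, hb j⟩) : ↥(𝒟 (n - d j))) : D)

variable {e : ∀ n, filtPiece F n ≃ₗ[k] 𝒟 n}

theorem IsInducedComul.isGradedComul (hΔ : IsInducedComul e) : IsGradedComul 𝒟 := by
  intro i x hx
  obtain ⟨q, hq⟩ := (e i).surjective ⟨x, hx⟩
  obtain ⟨⟨z, hz⟩, rfl⟩ := Submodule.Quotient.mk_surjective _ q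
  obtain ⟨s, d, a, b, ha, hb, hd, -, hΔz⟩ := hΔ i z hz
  rw [show x = e i (Submodule.Quotient.mk ⟨z, hz⟩) from congrArg Subtype.val hq.symm, hΔz]
  refine sum_mem fun j hj => Submodule.mem_iSup_of_mem (d j) <| Submodule.mem_iSup_of_mem
    (Finset.mem_range.2 (Nat.lt_succ_of_le (hd j hj))) ?_
  exact tmul_mem_tensorSubmodule (Submodule.coe_mem _) (Submodule.coe_mem _)

theorem IsInducedComul.comul_symbol (hΔ : IsInducedComul e) (hmono : Monotone F) {m : ℕ}
    {y : C} (hy : y ∈ F m) :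
    Coalgebra.comul (R := k) (symbol e m y) = ∑ c ∈ Finset.range (m + 1),
      TensorProduct.map (symbol e c) (symbol e (m - c)) (Coalgebra.comul (R := k) y) := by
  obtain ⟨s, d, a, b, ha, hb, hd, hΔy, hΔe⟩ := hΔ m y hy
  calc Coalgebra.comul (R := k) (symbol e m y)
      = ∑ j ∈ s, symbol e (d j) (a j) ⊗ₜ[k] symbol e (m - d j) (b j) := by
        rw [symbol_apply e hy, hΔe]
        exact Finset.sum_congr rfl fun j _ => by rw [symbol_apply e (ha j), symbol_apply e (hb j)]
    _ = ∑ j ∈ s, ∑ c ∈ Finset.range (m + 1), symbol e c (a j) ⊗ₜ[k] symbol e (m - c) (b j) := by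
        refine Finset.sum_congr rfl fun j hj => ?_
        have hdj := hd j hj
        rw [Finset.sum_eq_single (d j)]
        · intro c _ hc
          rcases lt_or_gt_of_ne hc with hc | hc
          · rw [symbol_eq_zero hmono (hb j) (by omega), tmul_zero]
          · rw [symbol_eq_zero hmono (ha j) hc, zero_tmul]
        · exact fun h => absurd (Finset.mem_range.2 (by omega)) h
    _ = _ := by
        rw [Finset.sum_comm, hΔy]
        simp only [map_sum, map_tmul]

variable [DirectSum.Decomposition 𝒟]

theorem IsInducedComul.mem_of_mem_wedge (hΔ : IsInducedComul e) (hmono : Monotone F)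
    (hD : ∀ n, coradFilt k D n = gradedUpTo 𝒟 n) {n m : ℕ} (hnm : n < m) {y : C}
    (hy : y ∈ wedge (F 0) (F n)) (hym : y ∈ F (m + 1)) : y ∈ F m := by
  rw [← symbol_eq_zero_iff e hym]
  have hmem : symbol e (m + 1) y ∈ wedge (gradedUpTo 𝒟 0) (gradedUpTo 𝒟 n) := by
    rw [wedge, Submodule.mem_comap, hΔ.comul_symbol hmono hym]
    exact sum_mem fun c _ => map_sup_tensorSubmodule_le (map_symbol_le hmono c 0)
      (map_symbol_le hmono (m + 1 - c) n) (Submodule.mem_map_of_mem hy)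
  rw [← hD, ← hD, ← coradFilt_succ, hD] at hmem
  exact eq_zero_of_mem_gradedUpTo 𝒟 (symbol_mem e _ y) hmem (by omega)

theorem IsInducedComul.mem_succ_of_mem_wedge (hΔ : IsInducedComul e) (hmono : Monotone F)
    (hD : ∀ n, coradFilt k D n = gradedUpTo 𝒟 n) {n : ℕ} {y : C}
    (hy : y ∈ wedge (F 0) (F n)) : ∀ m, y ∈ F m → y ∈ F (n + 1)
  | 0, hym => hmono (Nat.zero_le _) hym
  | m + 1, hym => by
    rcases le_or_gt (m + 1) (n + 1) with hle | hlt
    · exact hmono hle hym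
    · exact hΔ.mem_succ_of_mem_wedge hmono hD hy m (hΔ.mem_of_mem_wedge hmono hD (by omega) hy hym)

end InducedComul

/-- Let `C` be a coalgebra with an exhaustive coalgebra filtration
`{F_n}` with `F 0 = C₀` (the coradical).  If the associated graded coalgebra `gr_F C`
(realized as a coalgebra `D` with a decomposition `𝒟` and compatible linear isomorphisms
`F n / F (n-1) ≃ 𝒟 n`) is coradically graded, then `{F_n}` is the coradical filtration
of `C`. -/
theorem filtration_eq_coradFilt_of_gr_coradically_graded (k : Type*) [Field k]
    (C : Type*) [AddCommGroup C] [Module k C] [Coalgebra k C]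
    (F : ℕ → Submodule k C) (hmono : Monotone F) (hexh : ⨆ n, F n = ⊤)
    (hcoalgfilt : ∀ n : ℕ, ∀ x ∈ F n, Coalgebra.comul (R := k) x ∈
      ⨆ i ∈ Finset.range (n + 1), tensorSubmodule k (F i) (F (n - i)))
    (hF0 : F 0 = coradical k C)
    (D : Type*) [AddCommGroup D] [Module k D] [Coalgebra k D]
    (𝒟 : ℕ → Submodule k D) [DirectSum.Decomposition 𝒟]
    (e : ∀ n : ℕ, filtPiece F n ≃ₗ[k] ↥(𝒟 n))
    (hcomul : ∀ (n : ℕ) (x : C) (hx : x ∈ F n),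
      ∃ (s : Finset ℕ) (d : ℕ → ℕ) (a b : ℕ → C)
        (ha : ∀ j : ℕ, a j ∈ F (d j)) (hb : ∀ j : ℕ, b j ∈ F (n - d j)),
        (∀ j ∈ s, d j ≤ n) ∧
        Coalgebra.comul (R := k) x = ∑ j ∈ s, a j ⊗ₜ[k] b j ∧
        Coalgebra.comul (R := k) ((e n (Submodule.Quotient.mk ⟨x, hx⟩) : ↥(𝒟 n)) : D) =
          ∑ j ∈ s, ((e (d j) (Submodule.Quotient.mk ⟨a j, ha j⟩) : ↥(𝒟 (d j))) : D) ⊗ₜ[k]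
            ((e (n - d j) (Submodule.Quotient.mk ⟨b j, hb j⟩) : ↥(𝒟 (n - d j))) : D))
    (hcoradgraded : coradFilt k D 0 = 𝒟 0 ∧ coradFilt k D 1 = 𝒟 0 ⊔ 𝒟 1) :
    ∀ n : ℕ, F n = coradFilt k C n := by
  have hΔ : IsInducedComul e := hcomul
  have hD := coradFilt_eq_gradedUpTo hΔ.isGradedComul hcoradgraded.1 hcoradgraded.2
  have h0 : F 0 = coradFilt k C 0 := hF0
  intro n
  induction n with
  | zero => exact h0
  | succ n ih =>
    refine le_antisymm ((show IsCoalgebraFiltration F from hcoalgfilt).le_coradFilt hmono h0.le _)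
      fun y hy => ?_
    rw [coradFilt_succ, ← h0, ← ih] at hy
    obtain ⟨m, hym⟩ := (Submodule.mem_iSup_of_directed F hmono.directed_le).1
      (hexh ▸ Submodule.mem_top : y ∈ ⨆ n, F n)
    exact hΔ.mem_succ_of_mem_wedge hmono hD hy m hym
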